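/- Let S be a commutative Noetherian local ring with maximal ideal p, let y ∈ p, let I be an ideal of S, and let m ≥ 0 be a natural number. Then (as lengths of S-modules, with values in ℕ∞ and truncated subtraction) length_S(S/(I + (y))) ≥ length_S(S/(I + p^{m+1})) − length_S(S/(I + p^{m})). -/

import Mathlib

/-- The length of a module, valued in `ℕ∞`: the supremum of the lengths of strictly
increasing chains of submodules. -/
noncomputable def moduleLength (S M : Type*) [Ring S] [AddCommGroup M] [Module S M] : ℕ∞ :=
  ⨆ p : LTSeries (Submodule S M), (p.length : ℕ∞)

/-- Combinatorial lemma: from two sequences where at each step at least one strictly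
increases (and neither decreases), extract two strict chains whose lengths add up to `n`. -/
lemma aux_exists_chains {α β : Type*} [PartialOrder α] [PartialOrder β] :
    ∀ (n : ℕ) (f : Fin (n + 1) → α) (g : Fin (n + 1) → β),
      (∀ i : Fin n, f i.castSucc ≤ f i.succ) →
      (∀ i : Fin n, g i.castSucc ≤ g i.succ) →
      (∀ i : Fin n, f i.castSucc < f i.succ ∨ g i.castSucc < g i.succ) →
      ∃ (q : LTSeries α) (r : LTSeries β),
        q.last ≤ f (Fin.last n) ∧ r.last ≤ g (Fin.last n) ∧ n ≤ q.length + r.length := by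
  intro n
  induction n with
  | zero =>
    intro f g _ _ _
    exact ⟨RelSeries.singleton _ (f 0), RelSeries.singleton _ (g 0), le_rfl, le_rfl, by simp⟩
  | succ n ih =>
    intro f g hf hg h
    obtain ⟨q, r, hq, hr, hlen⟩ := ih (f ∘ Fin.castSucc) (g ∘ Fin.castSucc)
      (fun i => hf i.castSucc)
      (fun i => hg i.castSucc)
      (fun i => h i.castSucc)
    rcases h (Fin.last n) with hlt | hlt
    · refine ⟨q.snoc (f (Fin.last (n + 1))) ?_, r, ?_, ?_, ?_⟩
      · exact lt_of_le_of_lt hq (by simpa [Fin.succ_last] using hlt)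
      · rw [RelSeries.last_snoc]
      · exact hr.trans (by simpa [Fin.succ_last] using hg (Fin.last n))
      · simp only [RelSeries.snoc_length]
        omega
    · refine ⟨q, r.snoc (g (Fin.last (n + 1))) ?_, ?_, ?_, ?_⟩
      · exact lt_of_le_of_lt hr (by simpa [Fin.succ_last] using hlt)
      · exact hq.trans (by simpa [Fin.succ_last] using hf (Fin.last n))
      · rw [RelSeries.last_snoc]
      · simp only [RelSeries.snoc_length]
        omega

/-- Subadditivity of module length along a submodule. -/
lemma moduleLength_le_add {S M : Type*} [Ring S] [AddCommGroup M] [Module S M]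
    (N : Submodule S M) :
    moduleLength S M ≤ moduleLength S N + moduleLength S (M ⧸ N) := by
  refine iSup_le fun p => ?_
  set f : Fin (p.length + 1) → Submodule S N := fun i => Submodule.comap N.subtype (p i)
  set g : Fin (p.length + 1) → Submodule S (M ⧸ N) := fun i => Submodule.map N.mkQ (p i)
  have hf : ∀ i : Fin p.length, f i.castSucc ≤ f i.succ :=
    fun i => Submodule.comap_mono (p.step i).le
  have hg : ∀ i : Fin p.length, g i.castSucc ≤ g i.succ :=
    fun i => Submodule.map_mono (p.step i).le
  have h : ∀ i : Fin p.length, f i.castSucc < f i.succ ∨ g i.castSucc < g i.succ := by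
    intro i
    by_cases hinf : p i.succ ⊓ N ≤ p i.castSucc ⊓ N
    · right
      refine lt_of_le_of_ne (hg i) fun he => ?_
      have := sup_lt_sup_of_lt_of_inf_le_inf (p.step i) hinf
      have h2 : p i.castSucc ⊔ N = p i.succ ⊔ N := by
        have := congrArg (Submodule.comap N.mkQ) he
        simpa [g, Submodule.comap_map_mkQ, sup_comm] using this
      exact absurd h2 this.ne
    · left
      refine lt_of_le_of_ne (hf i) fun he => ?_
      have h2 : p i.castSucc ⊓ N = p i.succ ⊓ N := by
        have := congrArg (Submodule.map N.subtype) he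
        simpa [f, Submodule.map_comap_subtype, inf_comm] using this
      exact hinf (h2 ▸ le_rfl)
  obtain ⟨q, r, _, _, hlen⟩ := aux_exists_chains p.length f g hf hg h
  calc (p.length : ℕ∞) ≤ (q.length : ℕ∞) + (r.length : ℕ∞) := by exact_mod_cast hlen
    _ ≤ moduleLength S N + moduleLength S (M ⧸ N) :=
      add_le_add (le_iSup_of_le q le_rfl) (le_iSup_of_le r le_rfl)

/-- The length of the target of a surjective linear map is at most the length of the source. -/
lemma moduleLength_le_of_surjective {S M M' : Type*} [Ring S] [AddCommGroup M] [Module S M]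
    [AddCommGroup M'] [Module S M'] (φ : M →ₗ[S] M') (hφ : Function.Surjective φ) :
    moduleLength S M' ≤ moduleLength S M := by
  refine iSup_le fun p => ?_
  have hmono : Monotone (Submodule.comap φ) := fun _ _ h => Submodule.comap_mono h
  have hsm : StrictMono (Submodule.comap φ) :=
    hmono.strictMono_of_injective (Submodule.comap_injective_of_surjective hφ)
  exact le_iSup_of_le (p.map _ hsm) (by simp)

/-- The length of a submodule is at most the length of the module. -/
lemma moduleLength_submodule_le {S M : Type*} [Ring S] [AddCommGroup M] [Module S M]
    (N : Submodule S M) : moduleLength S N ≤ moduleLength S M := by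
  refine iSup_le fun p => ?_
  have hmono : Monotone (Submodule.map N.subtype) := fun _ _ h => Submodule.map_mono h
  have hsm : StrictMono (Submodule.map N.subtype) :=
    hmono.strictMono_of_injective
      (Submodule.map_injective_of_injective N.injective_subtype)
  exact le_iSup_of_le (p.map _ hsm) (by simp)

/-- Let `S` be a commutative Noetherian local ring with maximal ideal
`p`, `y ∈ p`, `I` an ideal of `S` and `m ≥ 0`. Then, as lengths of `S`-modules (valued in
`ℕ∞`, with truncated subtraction),
`length_S(S/(I+(y))) ≥ length_S(S/(I+p^{m+1})) − length_S(S/(I+p^m))`. -/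
theorem fibers_stmt11 {S : Type*} [CommRing S] [IsNoetherianRing S] [IsLocalRing S]
    (y : S) (hy : y ∈ IsLocalRing.maximalIdeal S) (I : Ideal S) (m : ℕ) :
    moduleLength S (S ⧸ (I + Ideal.span {y})) ≥
      moduleLength S (S ⧸ (I + (IsLocalRing.maximalIdeal S) ^ (m + 1))) -
        moduleLength S (S ⧸ (I + (IsLocalRing.maximalIdeal S) ^ m)) := by
  set P := IsLocalRing.maximalIdeal S
  set J : Ideal S := I + P ^ (m + 1) with hJ
  set K : Ideal S := I + P ^ m with hK
  set L : Ideal S := I + Ideal.span {y} with hL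
  rw [ge_iff_le, tsub_le_iff_right]
  -- the submodule of S ⧸ J generated by the image of y
  set N : Submodule S (S ⧸ J) := Submodule.map J.mkQ (Ideal.span {y}) with hN
  -- multiplication by y as a map S → S ⧸ J, killing K
  set φ : S →ₗ[S] S ⧸ J := J.mkQ ∘ₗ (y • LinearMap.id) with hφ
  have hKker : K ≤ LinearMap.ker φ := by
    intro s hs
    rw [hK] at hs
    simp only [Submodule.add_eq_sup] at hs
    obtain ⟨a, ha, b, hb, rfl⟩ := Submodule.mem_sup.1 hs
    have hmem : y * (a + b) ∈ J := by
      rw [hJ, mul_add]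
      refine Submodule.add_mem _ ?_ ?_
      · exact Ideal.mem_sup_left (I.mul_mem_left y ha)
      · exact Ideal.mem_sup_right (by rw [pow_succ, mul_comm]; exact Ideal.mul_mem_mul hy hb)
    have hval : φ (a + b) = Submodule.Quotient.mk (y * (a + b)) := by
      simp [hφ, smul_eq_mul]
    rw [LinearMap.mem_ker, hval, Submodule.Quotient.mk_eq_zero]
    exact hmem
  have hrange : LinearMap.range φ = N := by
    rw [hφ, hN]
    rw [LinearMap.range_comp]
    congr 1
    ext x
    simp only [LinearMap.mem_range, LinearMap.smul_apply, LinearMap.id_apply,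
      Ideal.mem_span_singleton, smul_eq_mul]
    exact ⟨fun ⟨s, hs⟩ => ⟨s, hs.symm⟩, fun ⟨s, hs⟩ => ⟨s, hs.symm⟩⟩
  -- N is a quotient of S ⧸ K
  have hNle : moduleLength S N ≤ moduleLength S (S ⧸ K) := by
    set ψ := K.liftQ φ hKker with hψ
    have hψr : LinearMap.range ψ = N := by rw [hψ, Submodule.range_liftQ, hrange]
    have : moduleLength S N = moduleLength S (LinearMap.range ψ) := by rw [hψr]
    rw [this]
    exact moduleLength_le_of_surjective ψ.rangeRestrict ψ.surjective_rangeRestrict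
  -- (S ⧸ J) ⧸ N is a quotient of S ⧸ L
  have hQle : moduleLength S ((S ⧸ J) ⧸ N) ≤ moduleLength S (S ⧸ L) := by
    set π : S →ₗ[S] (S ⧸ J) ⧸ N := N.mkQ ∘ₗ J.mkQ with hπ
    have hLker : L ≤ LinearMap.ker π := by
      have : LinearMap.ker π = Submodule.comap J.mkQ N := by
        rw [hπ, LinearMap.ker_comp, Submodule.ker_mkQ]
      rw [this, hN, Submodule.comap_map_mkQ]
      rw [hL, hJ]
      simp only [Submodule.add_eq_sup]
      exact sup_le (le_sup_left.trans le_sup_left) le_sup_right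
    have hπs : Function.Surjective π := by
      rw [hπ]
      exact (Submodule.mkQ_surjective N).comp (Submodule.mkQ_surjective J)
    refine moduleLength_le_of_surjective (L.liftQ π hLker) ?_
    rw [← LinearMap.range_eq_top, Submodule.range_liftQ, LinearMap.range_eq_top]
    exact hπs
  calc moduleLength S (S ⧸ J)
      ≤ moduleLength S N + moduleLength S ((S ⧸ J) ⧸ N) := moduleLength_le_add N
    _ ≤ moduleLength S (S ⧸ K) + moduleLength S (S ⧸ L) := add_le_add hNle hQle
    _ = moduleLength S (S ⧸ L) + moduleLength S (S ⧸ K) := add_comm _ _
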